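/- arXiv:1810.13323 — 5 statements merged into one kernel-verified Lean document; each statement's English description precedes it below -/
import Mathlib

section
/- For every real number L, twice the number of elements of E₁ of modulus L is at most the number of elements of E₀ of modulus 3L; that is, 2 · Set.ncard {λ ∈ E₁ : |λ| = L} ≤ Set.ncard {Λ ∈ E₀ : |Λ| = 3L} (both sets being finite). -/
/-!
Multiplication by `3` and by `-3` maps `E 1` into `E 0`, since `3 * (n + m ω + φ) = (3n - 1) + (3m - 1) ω`,
and triples moduli. The two images of `{z ∈ E 1 | ‖z‖ = L}` are disjoint: `3z = -3w` would give
`z + w = 0`, but the imaginary part of `z + w` is a nonzero multiple of `√3 / 6`. Finiteness of the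
right-hand set comes from the discreteness of the lattice `E 0 = ℤ + ℤω`.
-/

noncomputable def ω : ℂ := (1 + Real.sqrt 3 * Complex.I) / 2

noncomputable def φ : ℂ := -(1 + ω) / 3

noncomputable def E (j : ℕ) : Set ℂ := {z | ∃ n m : ℤ, z = (n : ℂ) + (m : ℂ) * ω + (j : ℂ) * φ}

lemma two_mul_ncard_le_of_injOn {α β : Type*} {s : Set α} {t : Set β} {f g : α → β}
    (hf : Set.InjOn f s) (hg : Set.InjOn g s) (hfs : Set.MapsTo f s t) (hgs : Set.MapsTo g s t)
    (hfg : ∀ x ∈ s, ∀ y ∈ s, f x ≠ g y) (ht : t.Finite) : 2 * s.ncard ≤ t.ncard := by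
  have hdisj : Disjoint (f '' s) (g '' s) := by
    rw [Set.disjoint_left]
    rintro _ ⟨x, hx, rfl⟩ ⟨y, hy, hxy⟩
    exact hfg x hx y hy hxy.symm
  calc 2 * s.ncard = (f '' s).ncard + (g '' s).ncard := by
        rw [hf.ncard_image, hg.ncard_image, two_mul]
    _ = (f '' s ∪ g '' s).ncard :=
        (Set.ncard_union_eq hdisj (ht.subset hfs.image_subset) (ht.subset hgs.image_subset)).symm
    _ ≤ t.ncard := Set.ncard_le_ncard (Set.union_subset hfs.image_subset hgs.image_subset) ht

lemma ω_re : ω.re = 1 / 2 := by simp [ω]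
lemma ω_im : ω.im = √3 / 2 := by simp [ω]

lemma linearIndependent_one_ω : LinearIndependent ℝ ![1, ω] := by
  rw [LinearIndependent.pair_iff]
  intro s t h
  have him := congrArg Complex.im h
  have hre := congrArg Complex.re h
  simp only [Complex.real_smul, Complex.add_im, Complex.add_re, Complex.mul_im, Complex.mul_re,
    Complex.ofReal_re, Complex.ofReal_im, ω_re, ω_im, Complex.one_re, Complex.one_im,
    Complex.zero_re, Complex.zero_im] at him hre
  have ht : t = 0 := by
    have : t * (√3 / 2) = 0 := by linarith
    simpa [Real.sqrt_eq_zero'] using this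
  subst ht
  exact ⟨by linarith, rfl⟩

noncomputable def eisensteinBasis : Module.Basis (Fin 2) ℝ ℂ :=
  basisOfLinearIndependentOfCardEqFinrank linearIndependent_one_ω
    (by rw [Fintype.card_fin, Complex.finrank_real_complex])

lemma E_zero_eq_span : E 0 = Submodule.span ℤ (Set.range eisensteinBasis) := by
  ext z
  simp only [E, eisensteinBasis, coe_basisOfLinearIndependentOfCardEqFinrank,
    Matrix.range_cons_cons_empty, SetLike.mem_coe, Submodule.mem_span_pair, zsmul_eq_mul,
    mul_one, Set.mem_ofPred_eq, CharP.cast_eq_zero, zero_mul, add_zero]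
  constructor <;> rintro ⟨a, b, h⟩ <;> exact ⟨a, b, h.symm⟩

lemma finite_E_zero_norm_eq (r : ℝ) : {z ∈ E 0 | ‖z‖ = r}.Finite := by
  have := ZSpan.setFinite_inter eisensteinBasis (Metric.isBounded_sphere (x := (0 : ℂ)) (r := r))
  rw [← E_zero_eq_span] at this
  convert this using 1
  ext z
  simp [and_comm]

lemma φ_im : φ.im = -(√3 / 6) := by
  simp [φ, ω]
  ring

lemma three_mul_mem_E_zero {z : ℂ} (hz : z ∈ E 1) : 3 * z ∈ E 0 := by
  obtain ⟨n, m, rfl⟩ := hz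
  refine ⟨3 * n - 1, 3 * m - 1, ?_⟩
  push_cast
  rw [φ]
  ring

lemma neg_mem_E_zero {z : ℂ} (hz : z ∈ E 0) : -z ∈ E 0 := by
  rw [E_zero_eq_span] at hz ⊢
  exact neg_mem hz

lemma add_ne_zero_of_mem_E_one {z w : ℂ} (hz : z ∈ E 1) (hw : w ∈ E 1) : z + w ≠ 0 := by
  obtain ⟨n, m, rfl⟩ := hz
  obtain ⟨n', m', rfl⟩ := hw
  intro h
  have him := congrArg Complex.im h
  simp only [Complex.add_im, Complex.mul_im, Complex.intCast_re, Complex.intCast_im, ω_re, ω_im,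
    φ_im, Nat.cast_one, Complex.one_re, Complex.one_im, Complex.zero_im] at him
  have h3 : (3 * (m + m') : ℝ) = 2 := by
    have := Real.sqrt_pos.mpr (show (0 : ℝ) < 3 by norm_num)
    nlinarith
  have : 3 * (m + m') = 2 := by exact_mod_cast h3
  omega

theorem two_mul_ncard_le (L : ℝ) :
    2 * Set.ncard {z ∈ E 1 | ‖z‖ = L} ≤
      Set.ncard {z ∈ E 0 | ‖z‖ = 3 * L} := by
  have h3 : Set.MapsTo (3 * ·) {z ∈ E 1 | ‖z‖ = L} {z ∈ E 0 | ‖z‖ = 3 * L} :=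
    fun z ⟨hz, hzL⟩ ↦ ⟨three_mul_mem_E_zero hz, by simp [hzL]⟩
  have hneg3 : Set.MapsTo (fun z ↦ -(3 * z)) {z ∈ E 1 | ‖z‖ = L} {z ∈ E 0 | ‖z‖ = 3 * L} :=
    fun z ⟨hz, hzL⟩ ↦ ⟨neg_mem_E_zero (three_mul_mem_E_zero hz), by simp [hzL]⟩
  refine two_mul_ncard_le_of_injOn ((mul_right_injective₀ three_ne_zero).injOn)
    ((neg_injective.comp (mul_right_injective₀ three_ne_zero)).injOn) h3 hneg3 ?_
    (finite_E_zero_norm_eq _)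
  rintro z ⟨hz, -⟩ w ⟨hw, -⟩ (h : 3 * z = -(3 * w))
  refine add_ne_zero_of_mem_E_one hz hw (mul_left_cancel₀ three_ne_zero ?_)
  linear_combination h
end

section
/- (Descent step in the proof of Theorem 3) If Λ ∈ E₀ and there exists an integer k with |Λ|² = 3(3k + 1) (i.e., |Λ|²/3 is an integer congruent to 1 modulo 3), then Λ/3 ∈ E₁ or −Λ/3 ∈ E₁. -/
lemma key9 : ∀ a b : ZMod 9, a^2 + a*b + b^2 = 3 →
    ((ZMod.castHom (by norm_num : (3:ℕ) ∣ 9) (ZMod 3)) a = 2 ∧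
     (ZMod.castHom (by norm_num : (3:ℕ) ∣ 9) (ZMod 3)) b = 2) ∨
    ((ZMod.castHom (by norm_num : (3:ℕ) ∣ 9) (ZMod 3)) a = 1 ∧
     (ZMod.castHom (by norm_num : (3:ℕ) ∣ 9) (ZMod 3)) b = 1) := by decide

lemma key (n m k : ℤ) (h : n^2 + n*m + m^2 = 9*k + 3) :
    (n % 3 = 2 ∧ m % 3 = 2) ∨ (n % 3 = 1 ∧ m % 3 = 1) := by
  have h9 : ((n : ZMod 9))^2 + (n : ZMod 9)*(m : ZMod 9) + (m : ZMod 9)^2 = 3 := by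
    have := congrArg (fun x : ℤ => (x : ZMod 9)) h
    push_cast at this
    rw [this]
    have h0 : (9 : ZMod 9) = 0 := by decide
    rw [h0]
    ring
  have := key9 _ _ h9
  have e1 : (ZMod.castHom (by norm_num : (3:ℕ) ∣ 9) (ZMod 3)) (n : ZMod 9) = (n : ZMod 3) := by
    simp
  have e2 : (ZMod.castHom (by norm_num : (3:ℕ) ∣ 9) (ZMod 3)) (m : ZMod 9) = (m : ZMod 3) := by
    simp
  rw [e1, e2] at this
  have conv3 : ∀ (x : ℤ) (c : ℤ), (x : ZMod 3) = (c : ZMod 3) → x % 3 = c % 3 := by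
    intro x c hx
    have : (3:ℤ) ∣ x - c := by
      have : ((x - c : ℤ) : ZMod 3) = 0 := by push_cast; rw [hx]; ring
      exact (ZMod.intCast_zmod_eq_zero_iff_dvd _ 3).1 this
    omega
  rcases this with ⟨h1, h2⟩ | ⟨h1, h2⟩
  · left
    exact ⟨by have := conv3 n 2 (by exact_mod_cast h1); omega,
           by have := conv3 m 2 (by exact_mod_cast h2); omega⟩
  · right
    exact ⟨by have := conv3 n 1 (by exact_mod_cast h1); omega,
           by have := conv3 m 1 (by exact_mod_cast h2); omega⟩

theorem descent_step (Λ : ℂ) (hΛ : Λ ∈ E 0)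
    (h : ∃ k : ℤ, Complex.normSq Λ = 3 * (3 * (k : ℝ) + 1)) :
    Λ / 3 ∈ E 1 ∨ -(Λ / 3) ∈ E 1 := by
  obtain ⟨n, m, hnm⟩ := hΛ
  obtain ⟨k, hk⟩ := h
  have hΛeq : Λ = (n : ℂ) + (m : ℂ) * ω := by
    rw [hnm]; push_cast; ring
  have hω : ω = Complex.mk (1/2) (Real.sqrt 3 / 2) := by
    apply Complex.ext <;> simp [ω, Complex.div_re, Complex.div_im, Complex.normSq_apply]
  have hsq : Real.sqrt 3 ^ 2 = 3 := Real.sq_sqrt (by norm_num)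
  have hns : Complex.normSq Λ = (n:ℝ)^2 + (n:ℝ)*(m:ℝ) + (m:ℝ)^2 := by
    rw [hΛeq, hω]
    simp [Complex.normSq_apply, Complex.add_re, Complex.add_im, Complex.mul_re, Complex.mul_im]
    ring_nf
    rw [hsq]
    ring
  rw [hns] at hk
  have hint : n^2 + n*m + m^2 = 9*k + 3 := by
    have : ((n^2 + n*m + m^2 : ℤ) : ℝ) = ((9*k + 3 : ℤ) : ℝ) := by push_cast; linarith
    exact_mod_cast this
  rcases key n m k hint with ⟨h1, h2⟩ | ⟨h1, h2⟩
  · left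
    obtain ⟨a, ha⟩ : ∃ a : ℤ, n = 3*a - 1 := ⟨n/3 + 1, by omega⟩
    obtain ⟨b, hb⟩ : ∃ b : ℤ, m = 3*b - 1 := ⟨m/3 + 1, by omega⟩
    refine ⟨a, b, ?_⟩
    rw [hΛeq, ha, hb, φ]
    push_cast
    ring
  · right
    obtain ⟨a, ha⟩ : ∃ a : ℤ, n = 3*a + 1 := ⟨n/3, by omega⟩
    obtain ⟨b, hb⟩ : ∃ b : ℤ, m = 3*b + 1 := ⟨m/3, by omega⟩
    refine ⟨-a, -b, ?_⟩
    rw [hΛeq, ha, hb, φ]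
    push_cast
    ring
end

section
/- (Theorem 3, main result) Let L be a real number. The set {λ ∈ E₁ : |λ| = L} has exactly 3 elements if and only if there exists a positive natural number u, all of whose prime factors are congruent to 2 modulo 3, such that L = u/√3. -/
def eisNorm (c d : ℤ) : ℤ := c ^ 2 + c * d + d ^ 2

lemma eisNorm_comm (c d : ℤ) : eisNorm c d = eisNorm d c := by
  unfold eisNorm; ring

lemma eisNorm_neg (c d : ℤ) : eisNorm (-c) (-d) = eisNorm c d := by
  unfold eisNorm; ring

lemma eisNorm_mul_mul (a c d : ℤ) : eisNorm (a * c) (a * d) = a ^ 2 * eisNorm c d := by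
  unfold eisNorm; ring

lemma four_mul_eisNorm (c d : ℤ) : 4 * eisNorm c d = (2 * c + d) ^ 2 + 3 * d ^ 2 := by
  unfold eisNorm; ring

lemma eisNorm_eq_sub_sq_add (c d : ℤ) : eisNorm c d = (c - d) ^ 2 + 3 * (c * d) := by
  unfold eisNorm; ring

lemma eisNorm_pos {c d : ℤ} (h : c ≠ 0 ∨ d ≠ 0) : 0 < eisNorm c d := by
  wlog hd : d ≠ 0 generalizing c d
  · rw [eisNorm_comm]; exact this h.symm (h.resolve_right hd)
  nlinarith [four_mul_eisNorm c d, sq_nonneg (2 * c + d), sq_pos_of_ne_zero hd]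

lemma eisNorm_eq_one {c d : ℤ} (h : eisNorm c d = 1) :
    (c = 1 ∧ d = 0) ∨ (c = 0 ∧ d = 1) ∨ (c = -1 ∧ d = 1) ∨
      (c = -1 ∧ d = 0) ∨ (c = 0 ∧ d = -1) ∨ (c = 1 ∧ d = -1) := by
  have hd := four_mul_eisNorm c d
  have hc := four_mul_eisNorm d c
  rw [eisNorm_comm, h] at hc
  rw [h] at hd
  have : -1 ≤ c := by nlinarith [sq_nonneg (2 * d + c)]
  have : c ≤ 1 := by nlinarith [sq_nonneg (2 * d + c)]
  have : -1 ≤ d := by nlinarith [sq_nonneg (2 * c + d)]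
  have : d ≤ 1 := by nlinarith [sq_nonneg (2 * c + d)]
  unfold eisNorm at h
  interval_cases c <;> interval_cases d <;> omega

lemma ZMod.exists_sq_add_add_one_eq_zero_iff {p : ℕ} [Fact p.Prime] (hp3 : p ≠ 3) :
    (∃ x : ZMod p, x ^ 2 + x + 1 = 0) ↔ p % 3 = 1 := by
  have hp := (Fact.out : p.Prime).two_le
  constructor
  · rintro ⟨x, hx⟩
    have hx0 : x ≠ 0 := by rintro rfl; simp at hx
    have hx1 : x ≠ 1 := by
      rintro rfl
      have h3 : ((3 : ℕ) : ZMod p) = 0 := by push_cast; linear_combination hx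
      rw [ZMod.natCast_eq_zero_iff] at h3
      exact hp3 ((Nat.prime_dvd_prime_iff_eq Fact.out Nat.prime_three).mp h3)
    have hord : orderOf x = 3 := orderOf_eq_prime (by linear_combination (x - 1) * hx) hx1
    have := hord ▸ ZMod.orderOf_dvd_card_sub_one hx0
    omega
  · intro hp1
    have h3 : 3 ∣ Fintype.card (ZMod p)ˣ := by
      rw [ZMod.card_units_eq_totient, Nat.totient_prime Fact.out]; omega
    obtain ⟨g, hg⟩ := exists_prime_orderOf_dvd_card 3 h3
    have hg3 : (g : ZMod p) ^ 3 = 1 := by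
      rw [← Units.val_pow_eq_pow_val, ← hg, pow_orderOf_eq_one, Units.val_one]
    have hg1 : (g : ZMod p) - 1 ≠ 0 := by
      rw [sub_ne_zero, Ne, ← Units.val_one, Units.val_inj, ← orderOf_eq_one_iff, hg]
      norm_num
    have hfac : ((g : ZMod p) - 1) * ((g : ZMod p) ^ 2 + g + 1) = 0 := by linear_combination hg3
    exact ⟨g, (mul_eq_zero.mp hfac).resolve_left hg1⟩

lemma dvd_and_dvd_of_prime_dvd_eisNorm {p : ℕ} (hp : p.Prime) (hp2 : p % 3 = 2) {c d : ℤ}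
    (h : (p : ℤ) ∣ eisNorm c d) : (p : ℤ) ∣ c ∧ (p : ℤ) ∣ d := by
  have := Fact.mk hp
  simp only [← ZMod.intCast_zmod_eq_zero_iff_dvd] at h ⊢
  push_cast [eisNorm] at h
  have hd : (d : ZMod p) = 0 := by
    by_contra hd
    have hroot : ((c : ZMod p) / d) ^ 2 + c / d + 1 = 0 := by
      field_simp; linear_combination h
    have := (ZMod.exists_sq_add_add_one_eq_zero_iff (by omega)).mp ⟨_, hroot⟩
    omega
  rw [hd] at h
  exact ⟨pow_eq_zero_iff two_ne_zero |>.mp (by linear_combination h), hd⟩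

lemma dvd_and_dvd_of_sq_dvd_eisNorm {u : ℕ} (hu : ∀ p : ℕ, p.Prime → p ∣ u → p % 3 = 2)
    {c d : ℤ} (h : (u : ℤ) ^ 2 ∣ eisNorm c d) : (u : ℤ) ∣ c ∧ (u : ℤ) ∣ d := by
  induction u using induction_on_primes generalizing c d with
  | zero => exact absurd (hu 3 Nat.prime_three (dvd_zero 3)) (by norm_num)
  | one => simp
  | prime_mul p a hp ih =>
    have hp2 := hu p hp (dvd_mul_right p a)
    obtain ⟨⟨c, rfl⟩, ⟨d, rfl⟩⟩ := dvd_and_dvd_of_prime_dvd_eisNorm hp hp2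
      ((dvd_pow (by push_cast; exact dvd_mul_right _ _) two_ne_zero).trans h)
    have hp0 : (p : ℤ) ^ 2 ≠ 0 := pow_ne_zero 2 (by exact_mod_cast hp.ne_zero)
    rw [eisNorm_mul_mul, Nat.cast_mul, mul_pow] at h
    obtain ⟨hc, hd⟩ :=
      ih (fun q hq hqa => hu q hq (hqa.mul_left p)) ((mul_dvd_mul_iff_left hp0).mp h)
    push_cast
    exact ⟨mul_dvd_mul_left _ hc, mul_dvd_mul_left _ hd⟩

/-- Thue's lemma, by pigeonhole on `[0, √n]²`. -/
lemma ZMod.exists_sq_le_intCast_eq_mul (n : ℕ) [NeZero n] (y : ZMod n) :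
    ∃ e f : ℤ, (e ≠ 0 ∨ f ≠ 0) ∧ e ^ 2 ≤ n ∧ f ^ 2 ≤ n ∧ (e : ZMod n) = y * f := by
  set r := n.sqrt
  have hcard : (Finset.univ : Finset (ZMod n)).card <
      (Finset.range (r + 1) ×ˢ Finset.range (r + 1)).card := by
    rw [Finset.card_product, Finset.card_range, Finset.card_univ, ZMod.card]
    exact Nat.lt_succ_sqrt n
  obtain ⟨⟨a, b⟩, hab, ⟨a', b'⟩, hab', hne, heq⟩ := Finset.exists_ne_map_eq_of_card_lt_of_maps_to
    hcard (f := fun w : ℕ × ℕ => (w.1 : ZMod n) - y * w.2) (fun _ _ => Finset.mem_univ _)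
  simp only [Finset.mem_product, Finset.mem_range] at hab hab'
  have hr : (r : ℤ) ^ 2 ≤ n := by exact_mod_cast Nat.sqrt_le' n
  refine ⟨a - a', b - b', ?_, ?_, ?_, ?_⟩
  · by_contra! h
    exact hne (Prod.ext (by omega) (by omega))
  · nlinarith [sq_le_sq' (show -(r : ℤ) ≤ a - a' by omega) (show (a : ℤ) - a' ≤ r by omega)]
  · nlinarith [sq_le_sq' (show -(r : ℤ) ≤ b - b' by omega) (show (b : ℤ) - b' ≤ r by omega)]
  · push_cast
    linear_combination heq

lemma exists_eisNorm_eq_prime {p : ℕ} (hp : p.Prime) (hp1 : p % 3 = 1) :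
    ∃ e f : ℤ, eisNorm e f = p := by
  have := Fact.mk hp
  obtain ⟨y, hy⟩ := (ZMod.exists_sq_add_add_one_eq_zero_iff (by omega)).mpr hp1
  obtain ⟨e, f, hef, he, hf, hey⟩ := ZMod.exists_sq_le_intCast_eq_mul p y
  refine ⟨e, f, ?_⟩
  have hsq : ∀ s : ℤ, s ^ 2 ≠ p := fun s hs =>
    (Nat.prime_iff_prime_int.mp hp).not_isSquare ⟨s, by rw [← hs, sq]⟩
  obtain ⟨m, hm⟩ : (p : ℤ) ∣ eisNorm e f := by
    rw [← ZMod.intCast_zmod_eq_zero_iff_dvd]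
    push_cast [eisNorm, hey]
    linear_combination (f : ZMod p) ^ 2 * hy
  have hpos := eisNorm_pos hef
  have hlt : eisNorm e f < 3 * p := by
    unfold eisNorm
    nlinarith [lt_of_le_of_ne he (hsq e), lt_of_le_of_ne hf (hsq f), sq_nonneg (e - f)]
  have hp0 : (0 : ℤ) < p := by exact_mod_cast hp.pos
  obtain rfl | rfl : m = 1 ∨ m = 2 := by
    have : 0 < m := by nlinarith
    have : m < 3 := by nlinarith
    omega
  · rw [hm, mul_one]
  · obtain ⟨⟨e, rfl⟩, ⟨f, rfl⟩⟩ :=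
      dvd_and_dvd_of_prime_dvd_eisNorm Nat.prime_two (by norm_num) ⟨p, by rw [hm]; ring⟩
    rw [eisNorm_mul_mul] at hm
    have h2 : (2 : ℤ) ∣ p := ⟨eisNorm e f, by push_cast at hm; linarith⟩
    have := (Nat.prime_dvd_prime_iff_eq Nat.prime_two hp).mp (by exact_mod_cast h2)
    omega

lemma mul_ne_zero_of_eisNorm_eq_prime {p : ℕ} (hp : p.Prime) (hp3 : p ≠ 3) {e f : ℤ}
    (h : eisNorm e f = p) : e * f * (e + f) * (e - f) * (2 * e + f) * (e + 2 * f) ≠ 0 := by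
  have hsq : ∀ s : ℤ, (p : ℤ) ≠ s ^ 2 := fun s hs =>
    (Nat.prime_iff_prime_int.mp hp).not_isSquare ⟨s, by rw [hs, sq]⟩
  have h3sq : ∀ s : ℤ, (p : ℤ) ≠ 3 * s ^ 2 := fun s hs => by
    have h3 : (3 : ℤ) ∣ p := ⟨s ^ 2, hs⟩
    exact hp3 ((Nat.prime_dvd_prime_iff_eq Nat.prime_three hp).mp (by exact_mod_cast h3)).symm
  unfold eisNorm at h
  intro h0
  simp only [mul_eq_zero] at h0
  rcases h0 with ((((h0 | h0) | h0) | h0) | h0) | h0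
  · obtain rfl : e = 0 := h0
    exact hsq f (by linear_combination -h)
  · obtain rfl : f = 0 := h0
    exact hsq e (by linear_combination -h)
  · obtain rfl : f = -e := by linarith
    exact hsq e (by linear_combination -h)
  · obtain rfl : f = e := by linarith
    exact h3sq f (by linear_combination -h)
  · obtain rfl : f = -2 * e := by linarith
    exact h3sq e (by linear_combination -h)
  · obtain rfl : e = -2 * f := by linarith
    exact h3sq f (by linear_combination -h)

def primaryCircle (k : ℤ) : Set (ℤ × ℤ) :=
  {w | eisNorm w.1 w.2 = k ∧ (w.1 - w.2) % 3 = 1}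

lemma emod_three_of_mem_primaryCircle {k : ℤ} {w : ℤ × ℤ} (hw : w ∈ primaryCircle k) :
    k % 3 = 1 := by
  obtain ⟨rfl, hw⟩ := hw
  obtain ⟨q, hq⟩ : ∃ q, w.1 - w.2 = 3 * q + 1 := ⟨(w.1 - w.2) / 3, by omega⟩
  have : eisNorm w.1 w.2 = 3 * (3 * q ^ 2 + 2 * q + w.1 * w.2) + 1 := by
    rw [eisNorm_eq_sub_sq_add, hq]; ring
  omega

lemma mem_primaryCircle_rotate {k c d : ℤ} (h : (c, d) ∈ primaryCircle k) :
    (-(c + d), c) ∈ primaryCircle k := by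
  obtain ⟨hk, hcd⟩ := h
  exact ⟨by rw [← hk]; unfold eisNorm; ring, by omega⟩

lemma mem_primaryCircle_conj {k c d : ℤ} (h : (c, d) ∈ primaryCircle k) :
    (c + d, -d) ∈ primaryCircle k := by
  obtain ⟨hk, hcd⟩ := h
  exact ⟨by rw [← hk]; unfold eisNorm; ring, by omega⟩

lemma mem_primaryCircle_or_neg_mem {c d : ℤ} (h : ¬ 3 ∣ eisNorm c d) :
    (c, d) ∈ primaryCircle (eisNorm c d) ∨ (-c, -d) ∈ primaryCircle (eisNorm c d) := by
  have h3 : ¬ 3 ∣ c - d := fun ⟨q, hq⟩ =>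
    h ⟨3 * q ^ 2 + c * d, by rw [eisNorm_eq_sub_sq_add, hq]; ring⟩
  simp only [primaryCircle, Set.mem_ofPred_eq, eisNorm_neg, true_and]
  omega

lemma mul_mul_add_eq_zero_of_ncard_eq_three {k : ℤ} (h : (primaryCircle k).ncard = 3)
    {w : ℤ × ℤ} (hw : w ∈ primaryCircle k) : w.1 * w.2 * (w.1 + w.2) = 0 := by
  obtain ⟨c, d⟩ := w
  have hcd := hw.2
  have horbit : {(c, d), (-(c + d), c), (d, -(c + d))} = primaryCircle k := by
    refine Set.eq_of_subset_of_ncard_le ?_ ?_ (Set.finite_of_ncard_ne_zero (by omega))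
    · have h2 := mem_primaryCircle_rotate (mem_primaryCircle_rotate hw)
      rw [show -(-(c + d) + c) = d by ring] at h2
      rintro w (rfl | rfl | rfl)
      exacts [hw, mem_primaryCircle_rotate hw, h2]
    · rw [h]
      refine (Set.ncard_eq_three.mpr ⟨_, _, _, ?_, ?_, ?_, rfl⟩).ge <;>
        simp only [Ne, Prod.ext_iff] <;> omega
  have hconj := mem_primaryCircle_conj hw
  rw [← horbit] at hconj
  simp only [Set.mem_insert_iff, Set.mem_singleton_iff, Prod.ext_iff] at hconj
  rcases hconj with ⟨-, h0⟩ | ⟨h0, -⟩ | ⟨-, h0⟩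
  · simp [show d = 0 by omega]
  · simp [show c + d = 0 by omega]
  · simp [show c = 0 by omega]

lemma exists_sq_eq_of_mul_mul_add_eq_zero {c d : ℤ} (h : c * d * (c + d) = 0) :
    ∃ t, eisNorm c d = t ^ 2 := by
  unfold eisNorm
  simp only [mul_eq_zero] at h
  rcases h with (rfl | rfl) | h
  · exact ⟨d, by ring⟩
  · exact ⟨c, by ring⟩
  · exact ⟨c, by rw [show d = -c by linarith]; ring⟩

/-- The witness is `±v (e + fω)²`, where `t = p v` and `p = N(e, f)`. -/
lemma exists_mem_primaryCircle_sq_of_prime_dvd {p : ℕ} (hp : p.Prime) (hp1 : p % 3 = 1)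
    {t : ℤ} (hpt : (p : ℤ) ∣ t) (ht : ¬ 3 ∣ t) :
    ∃ w ∈ primaryCircle (t ^ 2), w.1 * w.2 * (w.1 + w.2) ≠ 0 := by
  obtain ⟨e, f, hef⟩ := exists_eisNorm_eq_prime hp hp1
  obtain ⟨v, rfl⟩ := hpt
  have hv : v ≠ 0 := by rintro rfl; simp at ht
  have hnorm : eisNorm (v * (e ^ 2 - f ^ 2)) (v * (2 * e * f + f ^ 2)) = (p * v) ^ 2 := by
    rw [← hef]; unfold eisNorm; ring
  have hprod : ∀ a b : ℤ, a = v * (e ^ 2 - f ^ 2) → b = v * (2 * e * f + f ^ 2) →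
      a * b * (a + b) = v ^ 3 * (e * f * (e + f) * (e - f) * (2 * e + f) * (e + 2 * f)) := by
    rintro a b rfl rfl; ring
  have hoff := mul_ne_zero (pow_ne_zero 3 hv) (mul_ne_zero_of_eisNorm_eq_prime hp (by omega) hef)
  have h3 : ¬ 3 ∣ eisNorm (v * (e ^ 2 - f ^ 2)) (v * (2 * e * f + f ^ 2)) := by
    rw [hnorm]; exact fun h3 => ht (Int.prime_three.dvd_of_dvd_pow h3)
  rw [← hnorm]
  rcases mem_primaryCircle_or_neg_mem h3 with hw | hw
  · exact ⟨_, hw, by rw [hprod _ _ rfl rfl]; exact hoff⟩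
  · refine ⟨_, hw, ?_⟩
    rw [show ∀ a b : ℤ, -a * -b * (-a + -b) = -(a * b * (a + b)) by intros; ring,
      hprod _ _ rfl rfl]
    exact neg_ne_zero.mpr hoff

lemma exists_eq_sq_of_ncard_primaryCircle_eq_three {k : ℤ} (h : (primaryCircle k).ncard = 3) :
    ∃ u : ℕ, 0 < u ∧ (∀ p : ℕ, p.Prime → p ∣ u → p % 3 = 2) ∧ k = u ^ 2 := by
  obtain ⟨w, hw⟩ := Set.nonempty_of_ncard_ne_zero (s := primaryCircle k) (by omega)
  have hk := emod_three_of_mem_primaryCircle hw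
  obtain ⟨t, ht⟩ := exists_sq_eq_of_mul_mul_add_eq_zero (mul_mul_add_eq_zero_of_ncard_eq_three h hw)
  rw [hw.1] at ht
  subst ht
  have ht3 : ¬ 3 ∣ t := fun h3 => by
    simp [Int.emod_eq_zero_of_dvd (dvd_pow h3 two_ne_zero)] at hk
  refine ⟨t.natAbs, Int.natAbs_pos.mpr (by rintro rfl; simp at ht3), fun p hp hpt => ?_,
    by rw [Int.natCast_natAbs, sq_abs]⟩
  have hpt : (p : ℤ) ∣ t := Int.natCast_dvd.mpr hpt
  have hp3 : p % 3 ≠ 0 := fun hp3 => ht3 <| by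
    obtain rfl := (Nat.prime_dvd_prime_iff_eq Nat.prime_three hp).mp (Nat.dvd_of_mod_eq_zero hp3)
    exact_mod_cast hpt
  have hp1 : p % 3 ≠ 1 := fun hp1 => by
    obtain ⟨w, hw, hoff⟩ := exists_mem_primaryCircle_sq_of_prime_dvd hp hp1 hpt ht3
    exact hoff (mul_mul_add_eq_zero_of_ncard_eq_three h hw)
  omega

lemma primaryCircle_sq {u : ℕ} (hu : ∀ p : ℕ, p.Prime → p ∣ u → p % 3 = 2) {t : ℤ}
    (ht : t = u ∨ t = -u) (ht3 : t % 3 = 1) :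
    primaryCircle ((u : ℤ) ^ 2) = {(t, 0), (-t, t), (0, -t)} := by
  have htu : t ^ 2 = (u : ℤ) ^ 2 := by rcases ht with rfl | rfl <;> ring
  have hu0 : (u : ℤ) ^ 2 ≠ 0 := by
    rw [← htu]; exact pow_ne_zero 2 (by rintro rfl; simp at ht3)
  ext ⟨c, d⟩
  simp only [primaryCircle, Set.mem_ofPred_eq, Set.mem_insert_iff, Set.mem_singleton_iff,
    Prod.ext_iff]
  constructor
  · rintro ⟨hcd, hcl⟩
    obtain ⟨⟨c, rfl⟩, ⟨d, rfl⟩⟩ := dvd_and_dvd_of_sq_dvd_eisNorm hu hcd.symm.dvd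
    rw [eisNorm_mul_mul, ← mul_one ((u : ℤ) ^ 2), mul_assoc, one_mul] at hcd
    have := eisNorm_eq_one (mul_left_cancel₀ hu0 hcd)
    rcases this with ⟨rfl, rfl⟩ | ⟨rfl, rfl⟩ | ⟨rfl, rfl⟩ | ⟨rfl, rfl⟩ | ⟨rfl, rfl⟩ | ⟨rfl, rfl⟩ <;>
      omega
  · rintro (⟨rfl, rfl⟩ | ⟨rfl, rfl⟩ | ⟨rfl, rfl⟩) <;>
      refine ⟨by rw [← htu]; unfold eisNorm; ring, by omega⟩

theorem ncard_primaryCircle_eq_three_iff (k : ℤ) : (primaryCircle k).ncard = 3 ↔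
    ∃ u : ℕ, 0 < u ∧ (∀ p : ℕ, p.Prime → p ∣ u → p % 3 = 2) ∧ k = u ^ 2 := by
  refine ⟨exists_eq_sq_of_ncard_primaryCircle_eq_three, ?_⟩
  rintro ⟨u, hu0, hu, rfl⟩
  have h3 : (u : ℤ) % 3 ≠ 0 := by have := hu 3 Nat.prime_three; omega
  obtain ⟨t, ht, ht3⟩ : ∃ t : ℤ, (t = u ∨ t = -u) ∧ t % 3 = 1 := by
    rcases (by omega : (u : ℤ) % 3 = 1 ∨ (u : ℤ) % 3 = 2) with h | h
    exacts [⟨u, .inl rfl, h⟩, ⟨-u, .inr rfl, by omega⟩]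
  rw [primaryCircle_sq hu ht ht3, Set.ncard_eq_three]
  refine ⟨_, _, _, ?_, ?_, ?_, rfl⟩ <;> simp only [Ne, Prod.ext_iff] <;> omega

lemma ω_sq : ω ^ 2 = ω - 1 := by
  have h3 : ((√3 : ℝ) : ℂ) ^ 2 = 3 := by norm_cast; simp
  unfold ω
  linear_combination (h3 * Complex.I ^ 2 + 3 * Complex.I_sq) / 4

lemma normSq_add_mul_ω (a b : ℝ) : Complex.normSq (a + b * ω) = a ^ 2 + a * b + b ^ 2 := by
  simp [Complex.normSq_apply, ω_re, ω_im]
  ring_nf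
  rw [Real.sq_sqrt (by norm_num)]
  ring

/-- As `(2ω - 1) / 3 = i / √3`, this is `c + dω` turned by a right angle and scaled by `1 / √3`. -/
noncomputable def latticePoint (w : ℤ × ℤ) : ℂ := (2 * ω - 1) / 3 * (w.1 + w.2 * ω)

lemma three_mul_sq_norm_latticePoint (w : ℤ × ℤ) :
    3 * ‖latticePoint w‖ ^ 2 = eisNorm w.1 w.2 := by
  have h1 := normSq_add_mul_ω (-1) 2
  have h2 := normSq_add_mul_ω w.1 w.2
  push_cast at h1 h2
  rw [Complex.sq_norm, latticePoint, map_mul, map_div₀, show 2 * ω - 1 = -1 + 2 * ω by ring, h1,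
    h2, Complex.normSq_ofNat, eisNorm]
  push_cast
  ring

lemma latticePoint_injective : Function.Injective latticePoint := by
  intro w w' h
  have hne : (2 * ω - 1) / 3 ≠ 0 := by
    intro h0
    have := congrArg Complex.im h0
    simp [ω_im] at this
  have h := mul_left_cancel₀ hne h
  have hre := congrArg Complex.re h
  have him := congrArg Complex.im h
  simp [ω_re, ω_im] at hre him
  rw [him] at hre
  exact Prod.ext (by exact_mod_cast add_right_cancel hre) him

lemma add_mul_ω_add_φ (n m : ℤ) :
    (n : ℂ) + m * ω + ((1 : ℕ) : ℂ) * φ = latticePoint (n + 2 * m - 1, 1 - 2 * n - m) := by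
  unfold latticePoint φ
  push_cast
  linear_combination (2 * (2 * n + m - 1) / 3 : ℂ) * ω_sq

lemma mem_E_one_iff {z : ℂ} :
    z ∈ E 1 ↔ ∃ w : ℤ × ℤ, (w.1 - w.2) % 3 = 1 ∧ latticePoint w = z := by
  constructor
  · rintro ⟨n, m, rfl⟩
    exact ⟨_, by dsimp only; omega, (add_mul_ω_add_φ n m).symm⟩
  · rintro ⟨⟨c, d⟩, hcd, rfl⟩
    obtain ⟨n, hn⟩ : ∃ n, 3 * n = 1 - c - 2 * d := ⟨(1 - c - 2 * d) / 3, by omega⟩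
    refine ⟨n, n + c + d, ?_⟩
    rw [add_mul_ω_add_φ]
    congr 2 <;> omega

lemma E_one_sphere_eq_image {L : ℝ} (hL : 0 ≤ L) {k : ℤ} (hk : (k : ℝ) = 3 * L ^ 2) :
    {z ∈ E 1 | ‖z‖ = L} = latticePoint '' primaryCircle k := by
  ext z
  constructor
  · rintro ⟨hz, rfl⟩
    obtain ⟨w, hw, rfl⟩ := mem_E_one_iff.mp hz
    refine ⟨w, ⟨?_, hw⟩, rfl⟩
    exact_mod_cast (three_mul_sq_norm_latticePoint w).symm.trans hk.symm
  · rintro ⟨w, ⟨hk', hw⟩, rfl⟩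
    refine ⟨mem_E_one_iff.mpr ⟨w, hw, rfl⟩, (pow_left_inj₀ (norm_nonneg _) hL two_ne_zero).mp ?_⟩
    have := three_mul_sq_norm_latticePoint w
    rw [hk', hk] at this
    linarith

lemma ncard_E_one_sphere {L : ℝ} (hL : 0 ≤ L) {k : ℤ} (hk : (k : ℝ) = 3 * L ^ 2) :
    {z ∈ E 1 | ‖z‖ = L}.ncard = (primaryCircle k).ncard := by
  rw [E_one_sphere_eq_image hL hk, Set.ncard_image_of_injective _ latticePoint_injective]

lemma eq_div_sqrt_three_iff {x y : ℝ} (hx : 0 ≤ x) (hy : 0 ≤ y) :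
    x = y / √3 ↔ 3 * x ^ 2 = y ^ 2 := by
  rw [eq_div_iff (by positivity), ← pow_left_inj₀ (by positivity) hy two_ne_zero, mul_pow,
    Real.sq_sqrt (by norm_num), mul_comm]

theorem magic_lengths (L : ℝ) :
    Set.ncard {z ∈ E 1 | ‖z‖ = L} = 3 ↔
      ∃ u : ℕ, 0 < u ∧ (∀ p : ℕ, p.Prime → p ∣ u → p % 3 = 2) ∧
        L = (u : ℝ) / Real.sqrt 3 := by
  constructor
  · intro h
    obtain ⟨z, hz, rfl⟩ := Set.nonempty_of_ncard_ne_zero (s := {z ∈ E 1 | ‖z‖ = L}) (by omega)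
    obtain ⟨w, -, rfl⟩ := mem_E_one_iff.mp hz
    have hk := three_mul_sq_norm_latticePoint w
    rw [ncard_E_one_sphere (norm_nonneg _) hk.symm, ncard_primaryCircle_eq_three_iff] at h
    obtain ⟨u, hu0, hu, hu2⟩ := h
    refine ⟨u, hu0, hu, (eq_div_sqrt_three_iff (norm_nonneg _) (Nat.cast_nonneg u)).mpr ?_⟩
    rw [hk, hu2]
    push_cast
    rfl
  · rintro ⟨u, hu0, hu, rfl⟩
    have hL : 0 ≤ (u : ℝ) / √3 := by positivity
    have hk : (((u : ℤ) ^ 2 : ℤ) : ℝ) = 3 * ((u : ℝ) / √3) ^ 2 := by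
      push_cast
      exact ((eq_div_sqrt_three_iff hL (Nat.cast_nonneg u)).mp rfl).symm
    rw [ncard_E_one_sphere hL hk, ncard_primaryCircle_eq_three_iff]
    exact ⟨u, hu0, hu, rfl⟩
end

section
/- (Theorem 3, backward direction) For every positive natural number u all of whose prime factors are congruent to 2 modulo 3, the set {λ ∈ E₁ : |λ| = u/√3} has exactly 3 elements. -/
/-!
Write a point of `E 1` as `(a + b ω) / 3` with `a ≡ b ≡ 2 (mod 3)`; then `|λ| = u / √3` says
`a² + ab + b² = 3u²`. Since `p ≡ 2 (mod 3)` forces `𝔽_p` to have no nontrivial cube root of unity,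
such a prime dividing `a² + ab + b²` divides both `a` and `b`. Hence `u` divides `a` and `b`, and
`(a / u, b / u)` is one of the six solutions of `a² + ab + b² = 3`; as `3 ∤ u`, exactly three of
them survive the congruence condition after scaling by `u`.
-/

theorem Nat.not_three_dvd_of_forall_prime_dvd_mod_three_eq_two {u : ℕ}
    (hu : ∀ p : ℕ, p.Prime → p ∣ u → p % 3 = 2) : ¬ 3 ∣ u :=
  fun h => by simpa using hu 3 Nat.prime_three h

theorem eq_zero_of_sq_add_mul_add_sq_eq_zero {K : Type*} [Field K] (h3 : (3 : K) ≠ 0)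
    (hcube : ∀ t : K, t ^ 3 = 1 → t = 1) {x y : K} (h : x ^ 2 + x * y + y ^ 2 = 0) :
    x = 0 ∧ y = 0 := by
  have hy : y = 0 := by
    by_contra hy
    have hroot : (x / y) ^ 2 + x / y + 1 = 0 := by
      field_simp
      linear_combination h
    have hone : x / y = 1 := hcube _ (by linear_combination (x / y - 1) * hroot)
    exact h3 (by rw [hone] at hroot; linear_combination hroot)
  subst hy
  exact ⟨pow_eq_zero_iff two_ne_zero |>.mp (by simpa using h), rfl⟩

theorem ZMod.eq_one_of_pow_three_eq_one {p : ℕ} [Fact p.Prime] (hp : p % 3 = 2) {t : ZMod p}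
    (ht : t ^ 3 = 1) : t = 1 := by
  have ht0 : t ≠ 0 := by rintro rfl; simp at ht
  have hcop : Nat.Coprime 3 (p - 1) := by
    have := (Fact.out : p.Prime).two_le
    rw [Nat.Prime.coprime_iff_not_dvd Nat.prime_three]
    omega
  exact orderOf_eq_one_iff.mp <| Nat.eq_one_of_dvd_coprimes hcop
    (orderOf_dvd_of_pow_eq_one ht) (ZMod.orderOf_dvd_card_sub_one ht0)

theorem Int.prime_dvd_and_dvd_of_dvd_sq_add_mul_add_sq {p : ℕ} (hp : p.Prime) (hp3 : p % 3 = 2)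
    {a b : ℤ} (h : (p : ℤ) ∣ a ^ 2 + a * b + b ^ 2) : (p : ℤ) ∣ a ∧ (p : ℤ) ∣ b := by
  have := Fact.mk hp
  simp only [← ZMod.intCast_zmod_eq_zero_iff_dvd] at h ⊢
  push_cast at h
  refine eq_zero_of_sq_add_mul_add_sq_eq_zero ?_ (fun _ => ZMod.eq_one_of_pow_three_eq_one hp3) h
  intro h3
  have hp_dvd := (ZMod.natCast_eq_zero_iff 3 p).mp (by exact_mod_cast h3)
  have := (Nat.prime_dvd_prime_iff_eq hp Nat.prime_three).mp hp_dvd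
  omega

theorem Int.dvd_and_dvd_of_sq_dvd_sq_add_mul_add_sq {u : ℕ}
    (hu : ∀ p : ℕ, p.Prime → p ∣ u → p % 3 = 2) {a b : ℤ}
    (h : (u : ℤ) ^ 2 ∣ a ^ 2 + a * b + b ^ 2) : (u : ℤ) ∣ a ∧ (u : ℤ) ∣ b := by
  induction u using induction_on_primes generalizing a b with
  | zero => exact absurd (dvd_zero 3) (Nat.not_three_dvd_of_forall_prime_dvd_mod_three_eq_two hu)
  | one => simp
  | prime_mul p v hp ih =>
    have hp3 := hu p hp (dvd_mul_right p v)
    obtain ⟨⟨a, rfl⟩, ⟨b, rfl⟩⟩ := Int.prime_dvd_and_dvd_of_dvd_sq_add_mul_add_sq hp hp3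
      (dvd_trans ⟨p * v ^ 2, by push_cast; ring⟩ h)
    have hv : (v : ℤ) ^ 2 ∣ a ^ 2 + a * b + b ^ 2 := by
      rw [show (p * a) ^ 2 + p * a * (p * b) + (p * b) ^ 2 = (p : ℤ) ^ 2 * (a ^ 2 + a * b + b ^ 2)
        by ring, Nat.cast_mul, mul_pow] at h
      exact (mul_dvd_mul_iff_left (pow_ne_zero 2 (Int.natCast_ne_zero.mpr hp.ne_zero))).mp h
    obtain ⟨ha, hb⟩ := ih (fun q hq hqv => hu q hq (hqv.mul_left p)) hv
    push_cast
    exact ⟨mul_dvd_mul_left _ ha, mul_dvd_mul_left _ hb⟩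

def normThreeSolutions : Finset (ℤ × ℤ) :=
  {(1, 1), (-1, -1), (2, -1), (-2, 1), (1, -2), (-1, 2)}

theorem mem_normThreeSolutions_iff {a b : ℤ} :
    (a, b) ∈ normThreeSolutions ↔ a ^ 2 + a * b + b ^ 2 = 3 := by
  constructor
  · intro h
    simp only [normThreeSolutions, Finset.mem_insert, Finset.mem_singleton, Prod.mk.injEq] at h
    rcases h with ⟨rfl, rfl⟩ | ⟨rfl, rfl⟩ | ⟨rfl, rfl⟩ | ⟨rfl, rfl⟩ | ⟨rfl, rfl⟩ | ⟨rfl, rfl⟩ <;>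
      norm_num
  · intro h
    have hb : -2 ≤ b ∧ b ≤ 2 := by constructor <;> nlinarith [sq_nonneg (2 * a + b)]
    have ha : -2 ≤ a ∧ a ≤ 2 := by constructor <;> nlinarith [sq_nonneg (a + 2 * b)]
    obtain ⟨ha₁, ha₂⟩ := ha
    obtain ⟨hb₁, hb₂⟩ := hb
    interval_cases a <;> interval_cases b <;> simp_all [normThreeSolutions]

theorem card_filter_normThreeSolutions {u : ℤ} (hu : ¬ 3 ∣ u) :
    (normThreeSolutions.filter fun t => (u * t.1) % 3 = 2 ∧ (u * t.2) % 3 = 2).card = 3 := by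
  have hu3 : u % 3 = 1 ∨ u % 3 = 2 := by omega
  simp only [Int.mul_emod u]
  rcases hu3 with h | h <;> rw [h] <;> decide

noncomputable def latticeThird (a b : ℤ) : ℂ := (a + b * ω) / 3

theorem latticeThird_re (a b : ℤ) : (latticeThird a b).re = (a + b / 2) / 3 := by
  simp [latticeThird, ω, div_eq_mul_inv]

theorem latticeThird_im (a b : ℤ) : (latticeThird a b).im = b * Real.sqrt 3 / 2 / 3 := by
  simp [latticeThird, ω, mul_div_assoc]

theorem normSq_latticeThird (a b : ℤ) :
    Complex.normSq (latticeThird a b) = ((a : ℝ) ^ 2 + a * b + b ^ 2) / 9 := by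
  rw [Complex.normSq_apply, latticeThird_re, latticeThird_im]
  linear_combination (b : ℝ) ^ 2 / 36 * Real.sq_sqrt (show (0 : ℝ) ≤ 3 by norm_num)

theorem latticeThird_inj {a b c d : ℤ} : latticeThird a b = latticeThird c d ↔ a = c ∧ b = d := by
  refine ⟨fun h => ?_, by rintro ⟨rfl, rfl⟩; rfl⟩
  have hre := congrArg Complex.re h
  have him := congrArg Complex.im h
  simp only [latticeThird_re, latticeThird_im] at hre him
  have hbd : (b : ℝ) = d := by nlinarith [Real.sqrt_pos.mpr (show (0 : ℝ) < 3 by norm_num)]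
  have hac : (a : ℝ) = c := by linarith
  exact ⟨by exact_mod_cast hac, by exact_mod_cast hbd⟩

theorem mem_E_one_iff_s13 {z : ℂ} :
    z ∈ E 1 ↔ ∃ a b : ℤ, a % 3 = 2 ∧ b % 3 = 2 ∧ z = latticeThird a b := by
  have key (n m : ℤ) :
      (n : ℂ) + m * ω + ((1 : ℕ) : ℂ) * φ = latticeThird (3 * n - 1) (3 * m - 1) := by
    simp only [latticeThird, φ]
    push_cast
    ring
  constructor
  · rintro ⟨n, m, rfl⟩
    exact ⟨_, _, by omega, by omega, key n m⟩
  · rintro ⟨a, b, ha, hb, rfl⟩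
    obtain ⟨n, rfl⟩ : ∃ n, a = 3 * n - 1 := ⟨(a + 1) / 3, by omega⟩
    obtain ⟨m, rfl⟩ : ∃ m, b = 3 * m - 1 := ⟨(b + 1) / 3, by omega⟩
    exact ⟨n, m, (key n m).symm⟩

theorem norm_latticeThird_eq_iff (a b : ℤ) (u : ℕ) :
    ‖latticeThird a b‖ = u / Real.sqrt 3 ↔ a ^ 2 + a * b + b ^ 2 = 3 * (u : ℤ) ^ 2 := by
  rw [← sq_eq_sq₀ (norm_nonneg _) (by positivity), Complex.sq_norm, normSq_latticeThird, div_pow,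
    Real.sq_sqrt (by norm_num)]
  constructor
  · intro h
    have : (a : ℝ) ^ 2 + a * b + b ^ 2 = 3 * u ^ 2 := by linear_combination 9 * h
    exact_mod_cast this
  · intro h
    have : (a : ℝ) ^ 2 + a * b + b ^ 2 = 3 * u ^ 2 := by exact_mod_cast h
    linear_combination this / 9

theorem setOf_mem_E_one_norm_eq {u : ℕ} (hu : ∀ p : ℕ, p.Prime → p ∣ u → p % 3 = 2) :
    {z ∈ E 1 | ‖z‖ = (u : ℝ) / Real.sqrt 3} =
      (fun t : ℤ × ℤ => latticeThird (u * t.1) (u * t.2)) ''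
        ↑(normThreeSolutions.filter
          fun t => ((u : ℤ) * t.1) % 3 = 2 ∧ ((u : ℤ) * t.2) % 3 = 2) := by
  ext z
  simp only [Set.mem_ofPred_eq, mem_E_one_iff_s13, Set.mem_image, Finset.coe_filter]
  constructor
  · rintro ⟨⟨a, b, ha, hb, rfl⟩, hnorm⟩
    rw [norm_latticeThird_eq_iff] at hnorm
    obtain ⟨⟨a, rfl⟩, ⟨b, rfl⟩⟩ :=
      Int.dvd_and_dvd_of_sq_dvd_sq_add_mul_add_sq hu ⟨3, by rw [hnorm]; ring⟩
    have hu0 : u ≠ 0 := by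
      rintro rfl
      exact Nat.not_three_dvd_of_forall_prime_dvd_mod_three_eq_two hu (dvd_zero 3)
    refine ⟨(a, b), ⟨mem_normThreeSolutions_iff.mpr ?_, ha, hb⟩, rfl⟩
    exact mul_left_cancel₀ (pow_ne_zero 2 (Int.natCast_ne_zero.mpr hu0))
      (by linear_combination hnorm)
  · rintro ⟨⟨a, b⟩, ⟨hab, ha, hb⟩, rfl⟩
    refine ⟨⟨_, _, ha, hb, rfl⟩, (norm_latticeThird_eq_iff _ _ _).mpr ?_⟩
    linear_combination (u : ℤ) ^ 2 * mem_normThreeSolutions_iff.mp hab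

theorem magic_lengths_backward_general (u : ℕ)
    (hprime : ∀ p : ℕ, p.Prime → p ∣ u → p % 3 = 2) :
    Set.ncard {z ∈ E 1 | ‖z‖ = (u : ℝ) / Real.sqrt 3} = 3 := by
  have h3 := Nat.not_three_dvd_of_forall_prime_dvd_mod_three_eq_two hprime
  have hu0 : (u : ℤ) ≠ 0 := Int.natCast_ne_zero.mpr (by rintro rfl; exact h3 (dvd_zero 3))
  have hinj : Function.Injective fun t : ℤ × ℤ => latticeThird (u * t.1) (u * t.2) :=
    fun s t h => by
      obtain ⟨h₁, h₂⟩ := latticeThird_inj.mp h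
      exact Prod.ext (mul_left_cancel₀ hu0 h₁) (mul_left_cancel₀ hu0 h₂)
  rw [setOf_mem_E_one_norm_eq hprime, Set.ncard_image_of_injective _ hinj, Set.ncard_coe_finset]
  exact card_filter_normThreeSolutions (by exact_mod_cast h3)

theorem magic_lengths_backward (u : ℕ) (hu : 0 < u)
    (hprime : ∀ p : ℕ, p.Prime → p ∣ u → p % 3 = 2) :
    Set.ncard {z ∈ E 1 | ‖z‖ = (u : ℝ) / Real.sqrt 3} = 3 :=
  magic_lengths_backward_general u hprime
end

section
/- (Arithmetic form of Theorem 3) Let k be a natural number. The set {(n, m) ∈ ℤ × ℤ : n² + m² + n·m − n − m = k} has exactly 3 elements if and only if there exists a positive natural number u with 3k + 1 = u² such that every prime factor of u is congruent to 2 modulo 3. -/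
set_option maxHeartbeats 1000000

lemma zmod_cube (p : ℕ) [hf : Fact p.Prime] (h : p % 3 = 1) :
    ∃ t : ZMod p, t^2 + t + 1 = 0 := by
  have hp := hf.out
  have h2 := hp.two_le
  have hp7 : 7 ≤ p := by
    by_contra hlt
    interval_cases p <;> revert hp <;> simp_all (config := {decide := true})
  -- get generator of units
  obtain ⟨g, hg⟩ := IsCyclic.exists_generator (α := (ZMod p)ˣ)
  have hcard : Fintype.card (ZMod p)ˣ = p - 1 := ZMod.card_units p
  have horder : orderOf g = p - 1 := by
    rw [orderOf_eq_card_of_forall_mem_zpowers hg, Nat.card_eq_fintype_card, hcard]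
  have h3dvd : 3 ∣ p - 1 := by omega
  set e := (p - 1) / 3 with he
  have he3 : 3 * e = p - 1 := by omega
  have hepos : 0 < e := by omega
  have helt : e < p - 1 := by omega
  set tu : (ZMod p)ˣ := g ^ e with htu
  have htu3 : tu ^ 3 = 1 := by
    rw [htu, ← pow_mul, mul_comm, he3, ← horder, pow_orderOf_eq_one]
  have htune : tu ≠ 1 := by
    intro h1
    have : orderOf g ∣ e := orderOf_dvd_of_pow_eq_one h1
    rw [horder] at this
    exact absurd (Nat.le_of_dvd hepos this) (by omega)
  set t : ZMod p := (tu : ZMod p) with ht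
  have ht3 : t ^ 3 = 1 := by
    rw [ht, ← Units.val_pow_eq_pow_val, htu3, Units.val_one]
  have htne : t ≠ 1 := by
    intro h1
    exact htune (Units.ext (by rw [← ht, h1, Units.val_one]))
  refine ⟨t, ?_⟩
  have hfac : (t - 1) * (t^2 + t + 1) = 0 := by
    have : (t - 1) * (t^2 + t + 1) = t^3 - 1 := by ring
    rw [this, ht3, sub_self]
  rcases mul_eq_zero.mp hfac with h0 | h0
  · exact absurd (sub_eq_zero.mp h0) htne
  · exact h0
lemma rep_prime (p : ℕ) (hp : p.Prime) (h1 : p % 3 = 1) :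
    ∃ a b : ℤ, a^2 + a*b + b^2 = (p : ℤ) := by
  haveI : Fact p.Prime := ⟨hp⟩
  obtain ⟨t, ht⟩ := zmod_cube p h1
  have h2 := hp.two_le
  set r := Nat.sqrt p with hr
  have hrlt : p < (r + 1) ^ 2 := by
    have := Nat.lt_succ_sqrt p
    nlinarith [Nat.lt_succ_sqrt p]
  have hrsq : r ^ 2 < p := by
    have hle : r ^ 2 ≤ p := by nlinarith [Nat.sqrt_le p]
    rcases lt_or_eq_of_le hle with h | h
    · exact h
    · exfalso
      have hrdvd : r ∣ p := ⟨r, by nlinarith⟩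
      rcases hp.eq_one_or_self_of_dvd r hrdvd with h' | h'
      · nlinarith
      · nlinarith
  -- pigeonhole
  have hcard : (Finset.range (r+1) ×ˢ Finset.range (r+1)).card = (r+1)^2 := by
    simp [Finset.card_product, pow_two]
  have hmap : ∀ x ∈ Finset.range (r+1) ×ˢ Finset.range (r+1),
      ((x.1 : ZMod p) + t * (x.2 : ZMod p)) ∈ (Finset.univ : Finset (ZMod p)) := by
    intro x _; exact Finset.mem_univ _
  have hlt : (Finset.univ : Finset (ZMod p)).card
      < (Finset.range (r+1) ×ˢ Finset.range (r+1)).card := by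
    rw [hcard, Finset.card_univ, ZMod.card]
    exact hrlt
  obtain ⟨x, hx, y, hy, hne, heq⟩ :=
    Finset.exists_ne_map_eq_of_card_lt_of_maps_to hlt hmap
  obtain ⟨x1, x2⟩ := x
  obtain ⟨y1, y2⟩ := y
  simp only [Finset.mem_product, Finset.mem_range] at hx hy
  obtain ⟨A, hA⟩ : ∃ A : ℤ, A = (x1 : ℤ) - (y1 : ℤ) := ⟨_, rfl⟩
  obtain ⟨B, hB⟩ : ∃ B : ℤ, B = (x2 : ℤ) - (y2 : ℤ) := ⟨_, rfl⟩
  have hABne : ¬ (A = 0 ∧ B = 0) := by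
    rintro ⟨ha, hb⟩
    apply hne
    have : x1 = y1 := by omega
    have : x2 = y2 := by omega
    simp_all
  have hkey : ((A^2 - A*B + B^2 : ℤ) : ZMod p) = 0 := by
    have heq' : ((x1 : ZMod p) + t * (x2 : ZMod p)) = ((y1 : ZMod p) + t * (y2 : ZMod p)) := heq
    have hAc : ((A : ℤ) : ZMod p) = (x1 : ZMod p) - (y1 : ZMod p) := by rw [hA]; push_cast; ring
    have hBc : ((B : ℤ) : ZMod p) = (x2 : ZMod p) - (y2 : ZMod p) := by rw [hB]; push_cast; ring
    have huw : ((A : ℤ) : ZMod p) + t * ((B : ℤ) : ZMod p) = 0 := by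
      rw [hAc, hBc]; linear_combination heq'
    push_cast
    linear_combination (((A:ℤ) : ZMod p) - t * ((B:ℤ):ZMod p) - ((B:ℤ):ZMod p)) * huw
      + (((B:ℤ):ZMod p))^2 * ht
  have hdvd : (p : ℤ) ∣ A^2 - A*B + B^2 := by
    rwa [ZMod.intCast_zmod_eq_zero_iff_dvd] at hkey
  obtain ⟨V, hV⟩ : ∃ V : ℤ, V = A^2 - A*B + B^2 := ⟨_, rfl⟩
  rw [← hV] at hdvd
  have hVpos : 0 < V := by
    rcases lt_or_eq_of_le (by rw [hV]; nlinarith [sq_nonneg (2*A - B), sq_nonneg B] : (0:ℤ) ≤ V) with h' | h'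
    · exact h'
    · exfalso
      have h'' : A^2 - A*B + B^2 = 0 := by rw [← hV, ← h']
      have hB2 : B^2 = 0 := by nlinarith [sq_nonneg (2*A - B)]
      have hB0 : B = 0 := sq_eq_zero_iff.mp hB2
      have hA2 : A^2 = 0 := by nlinarith
      have hA0 : A = 0 := sq_eq_zero_iff.mp hA2
      exact hABne ⟨hA0, hB0⟩
  have hx1r : (x1:ℤ) ≤ r := by exact_mod_cast Nat.lt_succ_iff.mp hx.1
  have hx2r : (x2:ℤ) ≤ r := by exact_mod_cast Nat.lt_succ_iff.mp hx.2
  have hy1r : (y1:ℤ) ≤ r := by exact_mod_cast Nat.lt_succ_iff.mp hy.1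
  have hy2r : (y2:ℤ) ≤ r := by exact_mod_cast Nat.lt_succ_iff.mp hy.2
  have hx1p : (0:ℤ) ≤ x1 := Int.natCast_nonneg _
  have hx2p : (0:ℤ) ≤ x2 := Int.natCast_nonneg _
  have hy1p : (0:ℤ) ≤ y1 := Int.natCast_nonneg _
  have hy2p : (0:ℤ) ≤ y2 := Int.natCast_nonneg _
  have hAbound : A^2 ≤ (r:ℤ)^2 := by rw [hA]; nlinarith
  have hBbound : B^2 ≤ (r:ℤ)^2 := by rw [hB]; nlinarith
  have hVlt : V < 3 * (p:ℤ) := by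
    have h3 : V ≤ 3 * (r:ℤ)^2 := by rw [hV]; nlinarith [sq_nonneg (A+B), sq_nonneg (A-B), hAbound, hBbound]
    have : (r:ℤ)^2 < (p:ℤ) := by exact_mod_cast hrsq
    linarith
  obtain ⟨c, hc⟩ := hdvd
  have hppos : (0:ℤ) < p := by exact_mod_cast hp.pos
  have hc12 : c = 1 ∨ c = 2 := by
    have hcpos : 0 < c := by nlinarith
    have : c < 3 := by nlinarith
    omega
  rcases hc12 with hc1 | hc2
  · refine ⟨A, -B, ?_⟩
    rw [hc1, mul_one] at hc
    linear_combination hc - hV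
  · -- V = 2p impossible by parity
    exfalso
    rw [hc2] at hc
    have hpne2 : p ≠ 2 := by intro h'; rw [h'] at h1; omega
    have hpodd : p % 2 = 1 := hp.eq_two_or_odd.resolve_left hpne2
    rcases Int.even_or_odd A with ⟨s, hs⟩ | ⟨s, hs⟩ <;>
      rcases Int.even_or_odd B with ⟨w, hw⟩ | ⟨w, hw⟩
    · -- both even : 4 | 2p
      have hpe : (p:ℤ) = 2 * (s^2 - s*w + w^2) := by
        have hV' : V = A^2 - A*B + B^2 := hV
        rw [hs, hw] at hV'
        linarith [hc, hV', sq_nonneg (s-w)]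
      have : (2:ℤ) ∣ (p:ℤ) := ⟨_, hpe⟩
      have h2p : (2:ℕ) ∣ p := by exact_mod_cast this
      exact absurd (hp.eq_one_or_self_of_dvd 2 h2p) (by omega)
    · obtain ⟨K, hK⟩ : ∃ K : ℤ, V = 2*K+1 := ⟨2*s^2 - 2*s*w - s + 2*w^2 + 2*w, by rw [hV, hs, hw]; ring⟩
      omega
    · obtain ⟨K, hK⟩ : ∃ K : ℤ, V = 2*K+1 := ⟨2*s^2 + 2*s - 2*s*w - w + 2*w^2, by rw [hV, hs, hw]; ring⟩
      omega
    · obtain ⟨K, hK⟩ : ∃ K : ℤ, V = 2*K+1 := ⟨2*s^2 - 2*s*w + 2*w^2 + s + w, by rw [hV, hs, hw]; ring⟩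
      omega
lemma inert_lemma (q : ℕ) (hq : q.Prime) (h2 : q % 3 = 2) (x y : ℤ)
    (h : (q:ℤ) ∣ x^2 + x*y + y^2) : (q:ℤ) ∣ x ∧ (q:ℤ) ∣ y := by
  haveI : Fact q.Prime := ⟨hq⟩
  set X : ZMod q := (x : ZMod q) with hX
  set Y : ZMod q := (y : ZMod q) with hY
  have hXY : X^2 + X*Y + Y^2 = 0 := by
    have := (ZMod.intCast_zmod_eq_zero_iff_dvd _ q).mpr h
    push_cast at this
    linear_combination this
  have hY0 : Y = 0 := by
    by_contra hY0
    set t : ZMod q := X * Y⁻¹ with htdef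
    have hinv : Y * Y⁻¹ = 1 := mul_inv_cancel₀ hY0
    have ht : t^2 + t + 1 = 0 := by
      rw [htdef]
      linear_combination (Y⁻¹)^2 * hXY - (X*Y⁻¹ + 1 + Y*Y⁻¹) * hinv
    have ht0 : t ≠ 0 := by
      intro h0
      rw [h0] at ht
      simp at ht
    have htne1 : t ≠ 1 := by
      intro h1
      rw [h1] at ht
      have h3 : ((3:ℕ) : ZMod q) = 0 := by push_cast; linear_combination ht
      have : q ∣ 3 := (ZMod.natCast_eq_zero_iff 3 q).mp h3
      have := Nat.le_of_dvd (by norm_num) this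
      interval_cases q <;> omega
    have ht3 : t^3 = 1 := by linear_combination (t - 1) * ht
    have htq : t^(q-1) = 1 := ZMod.pow_card_sub_one_eq_one ht0
    have hd3 : orderOf t ∣ 3 := orderOf_dvd_of_pow_eq_one ht3
    have hdq : orderOf t ∣ q - 1 := orderOf_dvd_of_pow_eq_one htq
    have hcop : Nat.Coprime 3 (q-1) :=
      (Nat.Prime.coprime_iff_not_dvd Nat.prime_three).mpr (by omega)
    have : orderOf t ∣ 1 := by
      have := Nat.dvd_gcd hd3 hdq
      rwa [Nat.Coprime.gcd_eq_one hcop] at this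
    have : orderOf t = 1 := Nat.dvd_one.mp this
    exact htne1 (orderOf_eq_one_iff.mp this)
  have hX0 : X = 0 := by
    have hsq : X^2 = 0 := by rw [hY0] at hXY; linear_combination hXY
    exact sq_eq_zero_iff.mp hsq
  constructor
  · exact (ZMod.intCast_zmod_eq_zero_iff_dvd _ q).mp hX0
  · exact (ZMod.intCast_zmod_eq_zero_iff_dvd _ q).mp hY0

lemma descent_lemma : ∀ (u : ℕ), (∀ p : ℕ, p.Prime → p ∣ u → p % 3 = 2) →
    ∀ x y : ℤ, x^2 + x*y + y^2 = (u:ℤ)^2 → (u:ℤ) ∣ x ∧ (u:ℤ) ∣ y := by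
  intro u
  induction u using Nat.strong_induction_on with
  | _ u ih =>
    intro hpr x y h
    rcases Nat.eq_zero_or_pos u with h0 | hupos
    · subst h0
      push_cast at h
      have hy : y = 0 := by nlinarith [sq_nonneg (2*x + y), sq_nonneg y, sq_nonneg (2*y + x), sq_nonneg x]
      have hx : x = 0 := by nlinarith [sq_nonneg (2*x + y)]
      simp [hx, hy]
    rcases Nat.eq_or_lt_of_le hupos with h1 | h1
    · rw [← h1]; simp
    -- u ≥ 2 : take min fac
    have hune : u ≠ 1 := by omega
    set q := u.minFac with hqdef
    have hq : q.Prime := Nat.minFac_prime hune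
    have hqd : q ∣ u := Nat.minFac_dvd u
    have hq2 : q % 3 = 2 := hpr q hq hqd
    obtain ⟨u', hu'⟩ := hqd
    have hqpos : 0 < q := hq.pos
    have hdvd : (q:ℤ) ∣ x^2 + x*y + y^2 := by
      rw [h, hu']
      push_cast
      exact ⟨(q:ℤ)*(u':ℤ)^2, by ring⟩
    obtain ⟨hdx, hdy⟩ := inert_lemma q hq hq2 x y hdvd
    obtain ⟨x', hx'⟩ := hdx
    obtain ⟨y', hy'⟩ := hdy
    have hqz : (q:ℤ) ≠ 0 := by exact_mod_cast hq.pos.ne'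
    have h' : x'^2 + x'*y' + y'^2 = (u':ℤ)^2 := by
      have : (q:ℤ)^2 * (x'^2 + x'*y' + y'^2) = (q:ℤ)^2 * (u':ℤ)^2 := by
        rw [hx', hy'] at h
        rw [hu'] at h
        push_cast at h
        linear_combination h
      exact mul_left_cancel₀ (pow_ne_zero 2 hqz) this
    have hu'pos : 0 < u' := by
      rcases Nat.eq_zero_or_pos u' with h0' | h0'
      · rw [h0', Nat.mul_zero] at hu'; omega
      · exact h0'
    have hu'lt : u' < u := by
      rw [hu']
      have h2q : 2 ≤ q := hq.two_le
      nlinarith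
    have hu'pr : ∀ p : ℕ, p.Prime → p ∣ u' → p % 3 = 2 := by
      intro p hp hpd
      exact hpr p hp (hpd.trans ⟨q, by rw [hu']; ring⟩)
    obtain ⟨hux, huy⟩ := ih u' hu'lt hu'pr x' y' h'
    obtain ⟨x0, hx0⟩ := hux
    obtain ⟨y0, hy0⟩ := huy
    constructor
    · exact ⟨x0, by rw [hx', hx0, hu']; push_cast; ring⟩
    · exact ⟨y0, by rw [hy', hy0, hu']; push_cast; ring⟩
lemma units_norm_one (x y : ℤ) (h : x^2 + x*y + y^2 = 1) :
    (x = 1 ∧ y = 0) ∨ (x = -1 ∧ y = 0) ∨ (x = 0 ∧ y = 1) ∨ (x = 0 ∧ y = -1) ∨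
    (x = 1 ∧ y = -1) ∨ (x = -1 ∧ y = 1) := by
  have hy : y^2 ≤ 1 := by nlinarith [sq_nonneg (2*x + y)]
  have hx : x^2 ≤ 1 := by nlinarith [sq_nonneg (2*y + x)]
  have hy1 : -1 ≤ y := by nlinarith
  have hy2 : y ≤ 1 := by nlinarith
  have hx1 : -1 ≤ x := by nlinarith
  have hx2 : x ≤ 1 := by nlinarith
  interval_cases x <;> interval_cases y <;> omega

lemma fixed_of_three (S : Set (ℤ × ℤ)) (hS : S.ncard = 3)
    (hsym : ∀ p ∈ S, (p.2, p.1) ∈ S) : ∃ n : ℤ, (n, n) ∈ S := by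
  obtain ⟨a, b, c, hab, hac, hbc, hSeq⟩ := Set.ncard_eq_three.mp hS
  obtain ⟨a1, a2⟩ := a
  obtain ⟨b1, b2⟩ := b
  obtain ⟨c1, c2⟩ := c
  have haS : (a1, a2) ∈ S := by rw [hSeq]; simp
  have hbS : (b1, b2) ∈ S := by rw [hSeq]; simp
  have hcS : (c1, c2) ∈ S := by rw [hSeq]; simp
  by_cases ha : a1 = a2
  · exact ⟨a1, by simpa [← ha] using haS⟩
  by_cases hb : b1 = b2
  · exact ⟨b1, by simpa [← hb] using hbS⟩
  by_cases hc : c1 = c2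
  · exact ⟨c1, by simpa [← hc] using hcS⟩
  exfalso
  have h1 := hsym _ haS
  have h2 := hsym _ hbS
  have h3 := hsym _ hcS
  rw [hSeq] at h1 h2 h3
  simp only [Set.mem_insert_iff, Set.mem_singleton_iff, Prod.mk.injEq] at h1 h2 h3
  simp only [ne_eq, Prod.mk.injEq, not_and] at hab hac hbc
  omega
lemma not_prime_sq (p : ℕ) (hp : p.Prime) (d : ℤ) (hd : d^2 = (p:ℤ)) : False := by
  have h1 : d.natAbs ^ 2 = p := by
    have := congrArg Int.natAbs hd
    rwa [Int.natAbs_pow, Int.natAbs_natCast] at this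
  have h2 := hp.two_le
  rcases hp.eq_one_or_self_of_dvd d.natAbs ⟨d.natAbs, by rw [← h1]; ring⟩ with h | h
  · rw [h] at h1; omega
  · rw [h] at h1; nlinarith

theorem magic_lengths_arith (k : ℕ) :
    Set.ncard {p : ℤ × ℤ | p.1^2 + p.2^2 + p.1 * p.2 - p.1 - p.2 = (k : ℤ)} = 3 ↔
      ∃ u : ℕ, 0 < u ∧ 3 * k + 1 = u^2 ∧ ∀ p : ℕ, p.Prime → p ∣ u → p % 3 = 2 := by
  set S := {p : ℤ × ℤ | p.1^2 + p.2^2 + p.1 * p.2 - p.1 - p.2 = (k : ℤ)} with hSdef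
  have hmemS : ∀ a b : ℤ, (a, b) ∈ S ↔ a^2 + b^2 + a*b - a - b = (k:ℤ) := by
    intro a b; rw [hSdef]; rfl
  constructor
  · intro hcard3
    have hsym : ∀ p ∈ S, (p.2, p.1) ∈ S := by
      rintro ⟨pn, pm⟩ hp
      rw [hmemS] at hp ⊢
      linear_combination hp
    obtain ⟨n, hn⟩ := fixed_of_three S hcard3 hsym
    rw [hmemS] at hn
    have hk : 3*n^2 - 2*n = (k:ℤ) := by linear_combination hn
    have h3n : 3*n ≠ 1 := by omega
    refine ⟨(3*n-1).natAbs, ?_, ?_, ?_⟩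
    · rcases Nat.eq_zero_or_pos (3*n-1).natAbs with h0 | h0
      · exfalso; have := Int.natAbs_eq_zero.mp h0; omega
      · exact h0
    · have : ((3*k+1 : ℕ) : ℤ) = (((3*n-1).natAbs)^2 : ℕ) := by
        push_cast
        rw [sq_abs]
        linear_combination -3*hk
      exact_mod_cast this
    · intro p hp hpd
      by_contra hne2
      have hsq : 3*(k:ℤ)+1 = (3*n-1)^2 := by linear_combination -3*hk
      have hp3cases : p % 3 = 0 ∨ p % 3 = 1 := by omega
      rcases hp3cases with h0 | h1
      · have hp3 : p = 3 := ((Nat.prime_dvd_prime_iff_eq Nat.prime_three hp).mp (by omega)).symm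
        rw [hp3] at hpd
        have h3v : (3:ℤ) ∣ (3*n-1) := by
          have := Int.natCast_dvd_natCast.mpr hpd
          rwa [Int.natCast_natAbs, dvd_abs] at this
        omega
      · -- hard case
        obtain ⟨a, b, hab⟩ := rep_prime p hp h1
        have hpv : (p:ℤ) ∣ (3*n-1) := by
          have := Int.natCast_dvd_natCast.mpr hpd
          rwa [Int.natCast_natAbs, dvd_abs] at this
        obtain ⟨c, hc⟩ := hpv
        have hp3' : ¬ ((3:ℤ) ∣ (p:ℤ)) := by
          intro hd
          have : (3:ℕ) ∣ p := by exact_mod_cast hd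
          have := (Nat.prime_dvd_prime_iff_eq Nat.prime_three hp).mp this
          omega
        have hcne : c ≠ 0 := by
          intro h0; rw [h0, mul_zero] at hc; omega
        obtain ⟨A, hA⟩ : ∃ A : ℤ, A = c*(a^2-b^2) := ⟨_, rfl⟩
        obtain ⟨B, hB⟩ : ∃ B : ℤ, B = c*(2*a*b+b^2) := ⟨_, rfl⟩
        have hnorm : A^2 + A*B + B^2 = (3*n-1)^2 := by
          rw [hA, hB]
          linear_combination (c^2*(a^2+a*b+b^2+(p:ℤ)))*hab - ((p:ℤ)*c+(3*n-1))*hc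
        have hA0 : A ≠ 0 := by
          intro h0
          rw [h0] at hA
          rcases mul_eq_zero.mp hA.symm with h' | h'
          · exact hcne h'
          · rcases mul_eq_zero.mp (show (a-b)*(a+b) = 0 from by linear_combination h') with h'' | h''
            · have hab2 : a = b := by omega
              rw [hab2] at hab
              exact hp3' ⟨b^2, by linear_combination -hab⟩
            · have hab2 : a = -b := by omega
              rw [hab2] at hab
              exact not_prime_sq p hp b (by linear_combination hab)
        have hB0 : B ≠ 0 := by
          intro h0
          rw [h0] at hB
          rcases mul_eq_zero.mp hB.symm with h' | h'
          · exact hcne h'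
          · rcases mul_eq_zero.mp (show b*(2*a+b) = 0 from by linear_combination h') with h'' | h''
            · rw [h''] at hab
              exact not_prime_sq p hp a (by linear_combination hab)
            · have hab2 : b = -2*a := by omega
              rw [hab2] at hab
              exact hp3' ⟨a^2, by linear_combination -hab⟩
        have hAB0 : A + B ≠ 0 := by
          intro h0
          have h0' : c * (a*(a+2*b)) = 0 := by rw [hA, hB] at h0; linear_combination h0
          rcases mul_eq_zero.mp h0' with h' | h'
          · exact hcne h'
          · rcases mul_eq_zero.mp h' with h'' | h''
            · rw [h''] at hab
              exact not_prime_sq p hp b (by linear_combination hab)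
            · have hab2 : a = -2*b := by omega
              rw [hab2] at hab
              exact hp3' ⟨b^2, by linear_combination -hab⟩
        have h3BA : ¬ ((3:ℤ) ∣ (B - A)) := by
          rintro ⟨d, hd⟩
          have hd' : B - A = 3*d := by linarith [hd]
          have key : 3*(A^2+3*A*d+3*d^2) = 9*n^2-6*n+1 := by
            linear_combination hnorm + (-2*A-B-3*d)*hd'
          obtain ⟨M, hM⟩ : ∃ M : ℤ, M = n^2 := ⟨_, rfl⟩
          rw [← hM] at key
          obtain ⟨K, hK⟩ : ∃ K : ℤ, K = A^2+3*A*d+3*d^2 := ⟨_, rfl⟩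
          rw [← hK] at key
          omega
        have hBA : (B - A) % 3 = 1 ∨ (B - A) % 3 = 2 := by omega
        obtain ⟨X, Y, hX3, hXnorm, hXne, hYne, hXYne⟩ :
            ∃ X Y : ℤ, (3:ℤ) ∣ (Y - X + 1) ∧ X^2+X*Y+Y^2 = (3*n-1)^2 ∧
              X ≠ 0 ∧ Y ≠ 0 ∧ X + Y ≠ 0 := by
          rcases hBA with hcase | hcase
          · refine ⟨-A, -B, by omega, by linear_combination hnorm, ?_, ?_, ?_⟩
            · simpa using hA0
            · simpa using hB0
            · intro h0; exact hAB0 (by linarith)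
          · exact ⟨A, B, by omega, hnorm, hA0, hB0, hAB0⟩
        obtain ⟨m4, hm4⟩ := hX3
        obtain ⟨n4, hn4⟩ : ∃ n4 : ℤ, n4 = X + m4 := ⟨_, rfl⟩
        have hXv : X = n4 - m4 := by omega
        have hYv : Y = n4 + 2*m4 - 1 := by omega
        rw [hXv, hYv] at hXnorm
        have hs4 : (n4, m4) ∈ S := by
          rw [hmemS]
          have h3g : 3*(n4^2+m4^2+n4*m4-n4-m4) = 3*(k:ℤ) := by
            linear_combination hXnorm - hsq
          linarith
        have hs1 : (n, n) ∈ S := by rw [hmemS]; linear_combination hn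
        have hs2 : (1-2*n, n) ∈ S := by rw [hmemS]; linear_combination hk
        have hs3 : (n, 1-2*n) ∈ S := by rw [hmemS]; linear_combination hk
        have hd12 : ((n:ℤ), n) ≠ (1-2*n, n) := by
          simp only [ne_eq, Prod.mk.injEq, not_and]; intro h'; omega
        have hd13 : ((n:ℤ), n) ≠ (n, 1-2*n) := by
          simp only [ne_eq, Prod.mk.injEq, not_and]; intro h'; omega
        have hd23 : ((1-2*n : ℤ), n) ≠ (n, 1-2*n) := by
          simp only [ne_eq, Prod.mk.injEq, not_and]; intro h'; omega
        have hd41 : ((n4:ℤ), m4) ≠ (n, n) := by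
          simp only [ne_eq, Prod.mk.injEq, not_and]; intro h1' h2'; omega
        have hd42 : ((n4:ℤ), m4) ≠ (1-2*n, n) := by
          simp only [ne_eq, Prod.mk.injEq, not_and]; intro h1' h2'; omega
        have hd43 : ((n4:ℤ), m4) ≠ (n, 1-2*n) := by
          simp only [ne_eq, Prod.mk.injEq, not_and]; intro h1' h2'; omega
        have hfin : S.Finite := by
          rcases S.finite_or_infinite with hf | hf
          · exact hf
          · rw [Set.Infinite.ncard hf] at hcard3; omega
        have hsub : ({(n4, m4), ((n:ℤ), n), (1-2*n, n), (n, 1-2*n)} : Set (ℤ × ℤ)) ⊆ S := by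
          intro z hz
          simp only [Set.mem_insert_iff, Set.mem_singleton_iff] at hz
          rcases hz with rfl | rfl | rfl | rfl
          · exact hs4
          · exact hs1
          · exact hs2
          · exact hs3
        have hc4 : ({(n4, m4), ((n:ℤ), n), (1-2*n, n), (n, 1-2*n)} : Set (ℤ × ℤ)).ncard = 4 := by
          rw [Set.ncard_insert_of_notMem (by simp [hd41, hd42, hd43]) (Set.toFinite _),
              Set.ncard_insert_of_notMem (by simp [hd12, hd13]) (Set.toFinite _),
              Set.ncard_pair hd23]
        have hle := Set.ncard_le_ncard hsub hfin
        rw [hc4, hcard3] at hle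
        omega
  · rintro ⟨u, hupos, husq, hupr⟩
    have hcast : 3*(k:ℤ) + 1 = (u:ℤ)^2 := by exact_mod_cast husq
    have hu3 : u % 3 = 1 ∨ u % 3 = 2 := by
      by_contra hcon
      push_neg at hcon
      obtain ⟨t, ht⟩ : 3 ∣ u := by omega
      rw [ht] at husq
      obtain ⟨T, hT⟩ : ∃ T : ℕ, T = t^2 := ⟨_, rfl⟩
      rw [show (3*t)^2 = 9*t^2 from by ring, ← hT] at husq
      omega
    obtain ⟨v, hvor, hv3⟩ : ∃ v : ℤ, (v = (u:ℤ) ∨ v = -(u:ℤ)) ∧ (3:ℤ) ∣ v + 1 := by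
      rcases hu3 with h | h
      · exact ⟨-(u:ℤ), Or.inr rfl, by omega⟩
      · exact ⟨(u:ℤ), Or.inl rfl, by omega⟩
    have hv2 : v^2 = (u:ℤ)^2 := by
      rcases hvor with rfl | rfl
      · rfl
      · ring
    obtain ⟨n, hn⟩ : ∃ n : ℤ, v = 3*n - 1 := ⟨(v+1)/3, by omega⟩
    have hk' : 3*(k:ℤ) + 1 = (3*n-1)^2 := by rw [← hn, hv2]; exact hcast
    have hkk : (k:ℤ) = 3*n^2 - 2*n := by
      have h3 : 3*(k:ℤ) = 3*(3*n^2-2*n) := by linear_combination hk'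
      linarith
    have hvne : v ≠ 0 := by omega
    have hSeq : S = {((n:ℤ), n), (1-2*n, n), (n, 1-2*n)} := by
      ext z
      obtain ⟨nn, mm⟩ := z
      rw [hmemS]
      simp only [Set.mem_insert_iff, Set.mem_singleton_iff, Prod.mk.injEq]
      constructor
      · intro hmem
        have hxy : (nn-mm)^2 + (nn-mm)*(nn+2*mm-1) + (nn+2*mm-1)^2 = (u:ℤ)^2 := by
          linear_combination 3*hmem + hcast
        obtain ⟨hdx, hdy⟩ := descent_lemma u hupr _ _ hxy
        have hvdx : v ∣ (nn-mm) := by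
          rcases hvor with rfl | rfl
          · exact hdx
          · exact (neg_dvd).mpr hdx
        have hvdy : v ∣ (nn+2*mm-1) := by
          rcases hvor with rfl | rfl
          · exact hdy
          · exact (neg_dvd).mpr hdy
        obtain ⟨x1, hx1⟩ := hvdx
        obtain ⟨y1, hy1⟩ := hvdy
        have hone : x1^2 + x1*y1 + y1^2 = 1 := by
          rw [hx1, hy1] at hxy
          have h2 : v^2 * (x1^2 + x1*y1 + y1^2) = v^2 * 1 := by
            linear_combination hxy - hv2
          exact mul_left_cancel₀ (pow_ne_zero 2 hvne) h2
        rcases units_norm_one x1 y1 hone with ⟨e1, e2⟩ | ⟨e1, e2⟩ | ⟨e1, e2⟩ | ⟨e1, e2⟩ | ⟨e1, e2⟩ | ⟨e1, e2⟩ <;>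
          rw [e1] at hx1 <;> rw [e2] at hy1 <;> omega
      · rintro (⟨rfl, rfl⟩ | ⟨rfl, rfl⟩ | ⟨rfl, rfl⟩)
        · linear_combination -hkk
        · linear_combination -hkk
        · linear_combination -hkk
    rw [hSeq]
    apply Set.ncard_eq_three.mpr
    refine ⟨_, _, _, ?_, ?_, ?_, rfl⟩
    · simp only [ne_eq, Prod.mk.injEq, not_and]; intro h'; omega
    · simp only [ne_eq, Prod.mk.injEq, not_and]; intro h'; omega
    · simp only [ne_eq, Prod.mk.injEq, not_and]; intro h'; omega
end
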